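/- Let g₁ = x₁x₂x₃x₄x₅ + x₁x₂x₃x₆x₇ + x₄x₅x₈x₉x₁₀ and g₂ = x₁x₂x₃x₄x₅ + x₁x₆x₇x₈x₉ + x₆x₇x₈x₉x₁₀. Then wt(g₂) = 62 and wt(g₁+g₂) = 78, so 0‖g₁‖g₂‖(g₁+g₂) is a 12-variable function of degree at most 6 and Hamming weight 214. -/

import Mathlib

/-- Boolean functions in `m` variables. -/
abbrev BF (m : ℕ) := (Fin m → ZMod 2) → ZMod 2

/-- Hamming weight of a Boolean function. -/
def wt {m : ℕ} (f : BF m) : ℕ := (Finset.univ.filter fun x => f x = 1).card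

/-- `f` has algebraic degree at most `r`: it is represented by a polynomial of total degree `≤ r`. -/
def degLE {m : ℕ} (f : BF m) (r : ℕ) : Prop :=
  ∃ p : MvPolynomial (Fin m) (ZMod 2), p.totalDegree ≤ r ∧ ∀ x, MvPolynomial.eval x p = f x

/-- The monomial Boolean function with support `I`. -/
def mono {m : ℕ} (I : Finset (Fin m)) : BF m := fun x => ∏ i ∈ I, x i

/-- Concatenation `f₁‖f₂‖f₃‖f₄` of four `m`-variable functions into an `(m+2)`-variable function. -/
def concat4 {m : ℕ} (f1 f2 f3 f4 : BF m) : BF (m + 2) := fun x =>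
  (1 + x ⟨m, by omega⟩) * (1 + x ⟨m + 1, by omega⟩) * f1 (fun i => x (Fin.castLE (by omega) i))
  + x ⟨m, by omega⟩ * (1 + x ⟨m + 1, by omega⟩) * f2 (fun i => x (Fin.castLE (by omega) i))
  + (1 + x ⟨m, by omega⟩) * x ⟨m + 1, by omega⟩ * f3 (fun i => x (Fin.castLE (by omega) i))
  + x ⟨m, by omega⟩ * x ⟨m + 1, by omega⟩ * f4 (fun i => x (Fin.castLE (by omega) i))

/-- Concatenation `f‖g` of two `m`-variable functions into an `(m+1)`-variable function. -/
def concat2 {m : ℕ} (f g : BF m) : BF (m + 1) := fun x =>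
  (1 + x (Fin.last m)) * f (fun i => x i.castSucc) + x (Fin.last m) * g (fun i => x i.castSucc)

/-!
The weights of `g₁`, `g₂` and `g₁ + g₂` are finite computations over `𝔽₂¹⁰`. Weight is additive
under concatenation, since the selector variables split the cube into disjoint copies, which gives
`0 + 74 + 62 + 78 = 214`. For the degree, in characteristic 2 the concatenation `0‖f‖g‖(f+g)`
collapses to `x₁₁ f + x₁₂ g`, so its degree exceeds that of `f` and `g` by at most one.
-/

section

variable {m : ℕ}

lemma wt_eq_sum (f : BF m) : wt f = ∑ x, if f x = 1 then 1 else 0 := Finset.card_filter _ _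

@[simp]
lemma wt_zero : wt (0 : BF m) = 0 := by simp [wt]

lemma concat2_snoc (f g : BF m) (y : Fin m → ZMod 2) (b : ZMod 2) :
    concat2 f g (Fin.snoc y b) = (1 + b) * f y + b * g y := by simp [concat2]

lemma wt_concat2 (f g : BF m) : wt (concat2 f g) = wt f + wt g := by
  rw [wt_eq_sum, ← (Fin.snocEquiv fun _ => ZMod 2).sum_comp, Fintype.sum_prod_type,
    show (Finset.univ : Finset (ZMod 2)) = {0, 1} from rfl, Finset.sum_pair zero_ne_one]
  have snoc_eq (p : ZMod 2 × (Fin m → ZMod 2)) :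
      (Fin.snocEquiv fun _ => ZMod 2) p = Fin.snoc p.2 p.1 := rfl
  simp only [snoc_eq, concat2_snoc, wt_eq_sum]
  simp [show (1 + 1 : ZMod 2) = 0 from rfl]

lemma concat4_eq_concat2 (f1 f2 f3 f4 : BF m) :
    concat4 f1 f2 f3 f4 = concat2 (concat2 f1 f2) (concat2 f3 f4) := by
  funext x
  simp only [concat4, concat2, Fin.last, Fin.castSucc, Fin.castAdd, Fin.castLE]
  ring

lemma wt_concat4 (f1 f2 f3 f4 : BF m) :
    wt (concat4 f1 f2 f3 f4) = wt f1 + wt f2 + wt f3 + wt f4 := by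
  rw [concat4_eq_concat2, wt_concat2, wt_concat2, wt_concat2]
  ring

lemma concat4_zero_add (f g : BF m) :
    concat4 0 f g (f + g) = fun x =>
      x ⟨m, by omega⟩ * f (fun i => x (Fin.castLE (by omega) i))
        + x ⟨m + 1, by omega⟩ * g (fun i => x (Fin.castLE (by omega) i)) := by
  funext x
  simp only [concat4, Pi.zero_apply, Pi.add_apply]
  have two_eq_zero : (2 : ZMod 2) = 0 := rfl
  linear_combination (x ⟨m, by omega⟩ * x ⟨m + 1, by omega⟩ *
    (f (fun i => x (Fin.castLE (by omega) i)) + g (fun i => x (Fin.castLE (by omega) i)))) *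
    two_eq_zero

open MvPolynomial

lemma degLE_mono {I : Finset (Fin m)} {r : ℕ} (hI : I.card ≤ r) : degLE (mono I) r := by
  refine ⟨∏ i ∈ I, X i, (totalDegree_finsetProd _ _).trans ?_, fun x => by simp [mono]⟩
  simpa [totalDegree_X] using hI

lemma degLE.add {f g : BF m} {r : ℕ} (hf : degLE f r) (hg : degLE g r) : degLE (f + g) r := by
  obtain ⟨p, hp, hpf⟩ := hf
  obtain ⟨q, hq, hqg⟩ := hg
  exact ⟨p + q, (totalDegree_add p q).trans (max_le hp hq), fun x => by simp [hpf, hqg]⟩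

lemma degLE.var_mul_castLE {n : ℕ} {f : BF m} {r : ℕ} (hf : degLE f r) (j : Fin n) (h : m ≤ n) :
    degLE (fun x => x j * f (fun i => x (Fin.castLE h i))) (r + 1) := by
  obtain ⟨p, hp, hpf⟩ := hf
  refine ⟨X j * rename (Fin.castLE h) p, ?_,
    fun x => by simp [eval_rename, ← hpf, Function.comp_def]⟩
  calc (X j * rename (Fin.castLE h) p).totalDegree
      ≤ (X j : MvPolynomial (Fin n) (ZMod 2)).totalDegree + (rename (Fin.castLE h) p).totalDegree :=
        totalDegree_mul _ _
    _ ≤ 1 + r := by gcongr; exacts [(totalDegree_X j).le, (totalDegree_rename_le _ _).trans hp]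
    _ = r + 1 := add_comm 1 r

lemma degLE_concat4_zero_add {f g : BF m} {r : ℕ} (hf : degLE f r) (hg : degLE g r) :
    degLE (concat4 0 f g (f + g)) (r + 1) := by
  rw [concat4_zero_add]
  exact (hf.var_mul_castLE _ _).add (hg.var_mul_castLE _ _)

end

-- The paper's variables `x₁, …, x₁₀` are the indices `0, …, 9`.
def g₁ : BF 10 := mono {0, 1, 2, 3, 4} + mono {0, 1, 2, 5, 6} + mono {3, 4, 7, 8, 9}

def g₂ : BF 10 := mono {0, 1, 2, 3, 4} + mono {0, 5, 6, 7, 8} + mono {5, 6, 7, 8, 9}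

lemma wt_g₁ : wt g₁ = 74 := by decide

lemma wt_g₂ : wt g₂ = 62 := by decide

lemma wt_g₁_add_g₂ : wt (g₁ + g₂) = 78 := by decide

lemma degLE_g₁ : degLE g₁ 5 :=
  ((degLE_mono (by decide)).add (degLE_mono (by decide))).add (degLE_mono (by decide))

lemma degLE_g₂ : degLE g₂ 5 :=
  ((degLE_mono (by decide)).add (degLE_mono (by decide))).add (degLE_mono (by decide))

theorem stmt13 :
    wt (mono ({0, 1, 2, 3, 4} : Finset (Fin 10)) + mono ({0, 5, 6, 7, 8} : Finset (Fin 10)) + mono ({5, 6, 7, 8, 9} : Finset (Fin 10))) = 62 ∧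
    wt ((mono ({0, 1, 2, 3, 4} : Finset (Fin 10)) + mono ({0, 1, 2, 5, 6} : Finset (Fin 10)) + mono ({3, 4, 7, 8, 9} : Finset (Fin 10))) + (mono ({0, 1, 2, 3, 4} : Finset (Fin 10)) + mono ({0, 5, 6, 7, 8} : Finset (Fin 10)) + mono ({5, 6, 7, 8, 9} : Finset (Fin 10)))) = 78 ∧
    degLE (concat4 0 (mono ({0, 1, 2, 3, 4} : Finset (Fin 10)) + mono ({0, 1, 2, 5, 6} : Finset (Fin 10)) + mono ({3, 4, 7, 8, 9} : Finset (Fin 10))) (mono ({0, 1, 2, 3, 4} : Finset (Fin 10)) + mono ({0, 5, 6, 7, 8} : Finset (Fin 10)) + mono ({5, 6, 7, 8, 9} : Finset (Fin 10))) ((mono ({0, 1, 2, 3, 4} : Finset (Fin 10)) + mono ({0, 1, 2, 5, 6} : Finset (Fin 10)) + mono ({3, 4, 7, 8, 9} : Finset (Fin 10))) + (mono ({0, 1, 2, 3, 4} : Finset (Fin 10)) + mono ({0, 5, 6, 7, 8} : Finset (Fin 10)) + mono ({5, 6, 7, 8, 9} : Finset (Fin 10))))) 6 ∧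
    wt (concat4 0 (mono ({0, 1, 2, 3, 4} : Finset (Fin 10)) + mono ({0, 1, 2, 5, 6} : Finset (Fin 10)) + mono ({3, 4, 7, 8, 9} : Finset (Fin 10))) (mono ({0, 1, 2, 3, 4} : Finset (Fin 10)) + mono ({0, 5, 6, 7, 8} : Finset (Fin 10)) + mono ({5, 6, 7, 8, 9} : Finset (Fin 10))) ((mono ({0, 1, 2, 3, 4} : Finset (Fin 10)) + mono ({0, 1, 2, 5, 6} : Finset (Fin 10)) + mono ({3, 4, 7, 8, 9} : Finset (Fin 10))) + (mono ({0, 1, 2, 3, 4} : Finset (Fin 10)) + mono ({0, 5, 6, 7, 8} : Finset (Fin 10)) + mono ({5, 6, 7, 8, 9} : Finset (Fin 10))))) = 214 := by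
  refine ⟨wt_g₂, wt_g₁_add_g₂, degLE_concat4_zero_add degLE_g₁ degLE_g₂, ?_⟩
  show wt (concat4 0 g₁ g₂ (g₁ + g₂)) = 214
  rw [wt_concat4, wt_zero, wt_g₁, wt_g₂, wt_g₁_add_g₂]
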